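/- arXiv:1405.5900 — 6 statements merged into one kernel-verified Lean document; each statement's English description precedes it below -/
import Mathlib

section
/- If the vectors (XXᵀ)^j (XXᵀY), j = 0, 1, …, n−1, span ℝⁿ, then there exists β ∈ K^n(XᵀX, XᵀY) with Xβ = Y; in particular the minimum of ‖Y − Xβ‖² over β ∈ K^n(XᵀX, XᵀY) is 0. -/
/-! Since `(X Xᵀ)ʲ X = X (Xᵀ X)ʲ`, multiplication by `X` maps `K^n(XᵀX, XᵀY)` onto
`K^n(XXᵀ, XXᵀY)`; when the latter is all of `ℝⁿ`, `Y` is in the image, and the residual vanishes. -/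

open Matrix

namespace Matrix

variable {R m l : Type*} [Fintype m] [Fintype l] [DecidableEq m] [DecidableEq l]

theorem mul_mul_pow_mul [Semiring R] (A : Matrix m l R) (B : Matrix l m R) (j : ℕ) :
    (A * B) ^ j * A = A * (B * A) ^ j := by
  induction j with
  | zero => simp
  | succ k ih =>
    rw [pow_succ, pow_succ, Matrix.mul_assoc, Matrix.mul_assoc A B A, ← Matrix.mul_assoc, ih,
      Matrix.mul_assoc]

def krylovSubspace [CommSemiring R] (M : Matrix m m R) (b : m → R) (k : ℕ) :
    Submodule R (m → R) :=
  Submodule.span R {v | ∃ j < k, v = (M ^ j) *ᵥ b}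

theorem map_mulVecLin_krylovSubspace [CommSemiring R] (A : Matrix m l R) (B : Matrix l m R)
    (b : l → R) (k : ℕ) :
    (krylovSubspace (B * A) b k).map A.mulVecLin = krylovSubspace (A * B) (A *ᵥ b) k := by
  rw [krylovSubspace, Submodule.map_span, krylovSubspace]
  congr 1
  ext v
  simp only [Set.mem_image, Set.mem_ofPred_eq, mulVecLin_apply]
  constructor
  · rintro ⟨_, ⟨j, hj, rfl⟩, rfl⟩
    exact ⟨j, hj, by rw [mulVec_mulVec, mulVec_mulVec, mul_mul_pow_mul]⟩
  · rintro ⟨j, hj, rfl⟩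
    exact ⟨_, ⟨j, hj, rfl⟩, by rw [mulVec_mulVec, mulVec_mulVec, mul_mul_pow_mul]⟩

end Matrix

/-- If the vectors (XXᵀ)^j (XXᵀY), j = 0, …, n−1, span ℝⁿ, then there is
β ∈ K^n(XᵀX, XᵀY) with Xβ = Y; in particular the minimum of ‖Y − Xβ‖² over
β ∈ K^n(XᵀX, XᵀY) is 0. -/
theorem stmt1 {n p : ℕ} (X : Matrix (Fin n) (Fin p) ℝ) (Y : Fin n → ℝ)
    (hspan : Submodule.span ℝ
        {v : Fin n → ℝ | ∃ j < n, v = ((X * Xᵀ) ^ j) *ᵥ ((X * Xᵀ) *ᵥ Y)} = ⊤) :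
    (∃ β ∈ Submodule.span ℝ
        {v : Fin p → ℝ | ∃ j < n, v = ((Xᵀ * X) ^ j) *ᵥ (Xᵀ *ᵥ Y)}, X *ᵥ β = Y) ∧
    IsLeast {r : ℝ | ∃ β ∈ Submodule.span ℝ
        {v : Fin p → ℝ | ∃ j < n, v = ((Xᵀ * X) ^ j) *ᵥ (Xᵀ *ᵥ Y)},
        r = ∑ i, (Y i - (X *ᵥ β) i) ^ 2} 0 := by
  change krylovSubspace (X * Xᵀ) ((X * Xᵀ) *ᵥ Y) n = ⊤ at hspan
  rw [← mulVec_mulVec, ← map_mulVecLin_krylovSubspace] at hspan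
  obtain ⟨β, hβ, hXβ⟩ : Y ∈ (krylovSubspace (Xᵀ * X) (Xᵀ *ᵥ Y) n).map X.mulVecLin :=
    hspan ▸ Submodule.mem_top
  rw [mulVecLin_apply] at hXβ
  refine ⟨⟨β, hβ, hXβ⟩, ⟨β, hβ, by simp [hXβ]⟩, ?_⟩
  rintro r ⟨γ, -, rfl⟩
  exact Finset.sum_nonneg fun i _ => sq_nonneg _
end

section
/- For all integers 1 ≤ k < l < n, the minimizing residual polynomials satisfy Σ_{j=1}^n λ_j · Q̂_k(λ_j) · Q̂_l(λ_j) · p̂_j² = 0; that is, the polynomials Q̂_1, …, Q̂_{n−1} are pairwise orthogonal with respect to the discrete measure μ̂ = Σ_{j=1}^n λ_j (u_jᵀY)² δ_{λ_j}. -/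
/-! In the orthonormal eigenbasis of `XXᵀ` one has `‖Q(XXᵀ)Y‖² = ∑ⱼ Q(λⱼ)² p̂ⱼ²`, a weighted
least-squares functional in the values `Q(λⱼ)`. For `k < l` the polynomial `X · Q̂ₖ` has degree
`≤ l` and vanishes at `0`, so `Q̂ₗ + t X Q̂ₖ` competes with `Q̂ₗ` for every real `t`; minimality
of `Q̂ₗ` forces the linear coefficient `2 ∑ⱼ Q̂ₗ(λⱼ) λⱼ Q̂ₖ(λⱼ) p̂ⱼ²` of this quadratic in `t`
to vanish. -/

open Matrix Polynomial

theorem Matrix.aeval_mulVec_of_mulVec_eq_smul {n : Type*} [Fintype n] [DecidableEq n]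
    {R : Type*} [CommRing R] {A : Matrix n n R} {μ : R} {v : n → R} (hv : A *ᵥ v = μ • v)
    (Q : R[X]) : aeval A Q *ᵥ v = Q.eval μ • v := by
  have hlin : Matrix.toLinAlgEquiv' A v = μ • v := by rwa [Matrix.toLinAlgEquiv'_apply]
  rw [← Matrix.toLinAlgEquiv'_apply, ← aeval_algHom_apply (Matrix.toLinAlgEquiv' : _ ≃ₐ[R] _),
    Module.End.aeval_apply_of_mem_apply_eq_smul hlin]

section Orthonormal

variable {n : ℕ} {u : Fin n → Fin n → ℝ}

theorem sum_smul_dotProduct_sum_smul_of_orthonormal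
    (hortho : ∀ i j, u i ⬝ᵥ u j = if i = j then (1 : ℝ) else 0) (a b : Fin n → ℝ) :
    (∑ i, a i • u i) ⬝ᵥ (∑ j, b j • u j) = ∑ i, a i * b i := by
  simp [sum_dotProduct, dotProduct_sum, hortho, mul_comm]

theorem sum_dotProduct_smul_eq_of_orthonormal
    (hortho : ∀ i j, u i ⬝ᵥ u j = if i = j then (1 : ℝ) else 0) (Y : Fin n → ℝ) :
    ∑ j, (u j ⬝ᵥ Y) • u j = Y := by
  have hU : of u * (of u)ᵀ = 1 := by
    ext i j
    simpa [Matrix.mul_apply, dotProduct, Matrix.one_apply] using hortho i j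
  have hUt : (of u)ᵀ * of u = 1 := mul_eq_one_comm.mp hU
  calc ∑ j, (u j ⬝ᵥ Y) • u j = (of u)ᵀ *ᵥ (of u *ᵥ Y) := by
        rw [mulVec_transpose, vecMul_eq_sum]; rfl
    _ = Y := by rw [mulVec_mulVec, hUt, one_mulVec]

theorem mulVec_eq_smul_of_eq_sum_smul_vecMulVec
    (hortho : ∀ i j, u i ⬝ᵥ u j = if i = j then (1 : ℝ) else 0)
    {A : Matrix (Fin n) (Fin n) ℝ} {lam : Fin n → ℝ}
    (hA : A = ∑ i, lam i • vecMulVec (u i) (u i)) (j : Fin n) : A *ᵥ u j = lam j • u j := by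
  simp [hA, sum_mulVec, smul_mulVec, vecMulVec_mulVec, hortho]

theorem aeval_mulVec_eq_sum_of_eq_sum_smul_vecMulVec
    (hortho : ∀ i j, u i ⬝ᵥ u j = if i = j then (1 : ℝ) else 0)
    {A : Matrix (Fin n) (Fin n) ℝ}
    {lam : Fin n → ℝ} (hA : A = ∑ i, lam i • vecMulVec (u i) (u i)) (Q : ℝ[X]) (Y : Fin n → ℝ) :
    aeval A Q *ᵥ Y = ∑ j, (Q.eval (lam j) * (u j ⬝ᵥ Y)) • u j := by
  conv_lhs => rw [← sum_dotProduct_smul_eq_of_orthonormal hortho Y]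
  simp only [mulVec_sum, mulVec_smul,
    aeval_mulVec_of_mulVec_eq_smul (mulVec_eq_smul_of_eq_sum_smul_vecMulVec hortho hA _),
    smul_smul, mul_comm]

theorem sum_sq_aeval_mulVec_of_eq_sum_smul_vecMulVec
    (hortho : ∀ i j, u i ⬝ᵥ u j = if i = j then (1 : ℝ) else 0)
    {A : Matrix (Fin n) (Fin n) ℝ}
    {lam : Fin n → ℝ} (hA : A = ∑ i, lam i • vecMulVec (u i) (u i)) (Q : ℝ[X]) (Y : Fin n → ℝ) :
    ∑ i, (aeval A Q *ᵥ Y) i ^ 2 = ∑ j, Q.eval (lam j) ^ 2 * (u j ⬝ᵥ Y) ^ 2 := by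
  have h := sum_smul_dotProduct_sum_smul_of_orthonormal hortho
    (fun j ↦ Q.eval (lam j) * (u j ⬝ᵥ Y)) (fun j ↦ Q.eval (lam j) * (u j ⬝ᵥ Y))
  rw [← aeval_mulVec_eq_sum_of_eq_sum_smul_vecMulVec hortho hA] at h
  simp only [dotProduct, ← sq, mul_pow] at h
  exact h

end Orthonormal

theorem eq_zero_of_forall_le_quadratic {a b c : ℝ} (h : ∀ t : ℝ, c ≤ a * t ^ 2 + 2 * b * t + c) :
    b = 0 := by
  have hd : discrim a (2 * b) 0 ≤ 0 :=
    discrim_le_zero fun t ↦ by linarith [h t, sq t]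
  rw [discrim] at hd
  nlinarith

theorem sum_eval_mul_eval_mul_eq_zero_of_minimizes {ι : Type*} [Fintype ι] (w x : ι → ℝ)
    {l : ℕ} {P R : ℝ[X]} (hPdeg : P.natDegree ≤ l) (hP0 : P.eval 0 = 1)
    (hPmin : ∀ Q : ℝ[X], Q.natDegree ≤ l → Q.eval 0 = 1 →
      ∑ j, P.eval (x j) ^ 2 * w j ≤ ∑ j, Q.eval (x j) ^ 2 * w j)
    (hRdeg : R.natDegree ≤ l) (hR0 : R.eval 0 = 0) :
    ∑ j, P.eval (x j) * R.eval (x j) * w j = 0 := by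
  apply eq_zero_of_forall_le_quadratic (a := ∑ j, R.eval (x j) ^ 2 * w j)
    (c := ∑ j, P.eval (x j) ^ 2 * w j)
  intro t
  have h := hPmin (P + C t * R)
    (natDegree_add_le_of_degree_le hPdeg ((natDegree_C_mul_le t R).trans hRdeg))
    (by simp [hP0, hR0])
  simp only [eval_add, eval_mul, eval_C] at h
  convert h using 1
  simp only [Finset.mul_sum, Finset.sum_mul, ← Finset.sum_add_distrib]
  exact Finset.sum_congr rfl fun j _ ↦ by ring

theorem stmt2_general {n p : ℕ} (X : Matrix (Fin n) (Fin p) ℝ) (Y : Fin n → ℝ)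
    (lam : Fin n → ℝ) (u : Fin n → Fin n → ℝ)
    (hortho : ∀ i j, u i ⬝ᵥ u j = if i = j then (1 : ℝ) else 0)
    (hspec : X * Xᵀ = ∑ i, lam i • vecMulVec (u i) (u i))
    (Qhat : ℕ → Polynomial ℝ)
    (hQmem : ∀ k, 1 ≤ k → k < n → (Qhat k).natDegree ≤ k ∧ (Qhat k).eval 0 = 1)
    (hQmin : ∀ k, 1 ≤ k → k < n → ∀ Q : Polynomial ℝ, Q.natDegree ≤ k → Q.eval 0 = 1 →
      ∑ i, (((Polynomial.aeval (X * Xᵀ)) (Qhat k) *ᵥ Y) i) ^ 2 ≤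
        ∑ i, (((Polynomial.aeval (X * Xᵀ)) Q *ᵥ Y) i) ^ 2) :
    ∀ k l : ℕ, 1 ≤ k → k < l → l < n →
      ∑ j, lam j * (Qhat k).eval (lam j) * (Qhat l).eval (lam j) * (u j ⬝ᵥ Y) ^ 2 = 0 := by
  intro k l hk hkl hln
  have hl : 1 ≤ l := hk.trans hkl.le
  obtain ⟨hdeg_k, -⟩ := hQmem k hk (hkl.trans hln)
  obtain ⟨hdeg_l, heval_l⟩ := hQmem l hl hln
  have hmin_l : ∀ Q : ℝ[X], Q.natDegree ≤ l → Q.eval 0 = 1 →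
      ∑ j, (Qhat l).eval (lam j) ^ 2 * (u j ⬝ᵥ Y) ^ 2 ≤ ∑ j, Q.eval (lam j) ^ 2 * (u j ⬝ᵥ Y) ^ 2 := by
    intro Q hQ hQ0
    simpa only [sum_sq_aeval_mulVec_of_eq_sum_smul_vecMulVec hortho hspec] using
      hQmin l hl hln Q hQ hQ0
  have horth := sum_eval_mul_eval_mul_eq_zero_of_minimizes (fun j ↦ (u j ⬝ᵥ Y) ^ 2) lam hdeg_l
    heval_l hmin_l (R := Polynomial.X * Qhat k)
    (natDegree_mul_le.trans (by rw [natDegree_X]; omega)) (by simp)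
  rw [← horth]
  exact Finset.sum_congr rfl fun j _ ↦ by rw [eval_mul, eval_X]; ring

/-- The minimizing residual polynomials Q̂_1, …, Q̂_{n−1} are pairwise
orthogonal with respect to the discrete measure Σ_j λ_j (u_jᵀY)² δ_{λ_j}:
for 1 ≤ k < l < n, Σ_{j=1}^n λ_j Q̂_k(λ_j) Q̂_l(λ_j) (u_jᵀY)² = 0. -/
theorem stmt2 {n p : ℕ} (X : Matrix (Fin n) (Fin p) ℝ) (Y : Fin n → ℝ)
    (lam : Fin n → ℝ) (u : Fin n → Fin n → ℝ)
    (hortho : ∀ i j, u i ⬝ᵥ u j = if i = j then (1 : ℝ) else 0)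
    (hspec : X * Xᵀ = ∑ i, lam i • vecMulVec (u i) (u i))
    (hanti : StrictAnti lam) (hpos : ∀ i, 0 < lam i)
    (hphat : ∀ i, u i ⬝ᵥ Y ≠ 0)
    (Qhat : ℕ → Polynomial ℝ)
    (hQmem : ∀ k, 1 ≤ k → k < n → (Qhat k).natDegree ≤ k ∧ (Qhat k).eval 0 = 1)
    (hQmin : ∀ k, 1 ≤ k → k < n → ∀ Q : Polynomial ℝ, Q.natDegree ≤ k → Q.eval 0 = 1 →
      ∑ i, (((Polynomial.aeval (X * Xᵀ)) (Qhat k) *ᵥ Y) i) ^ 2 ≤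
        ∑ i, (((Polynomial.aeval (X * Xᵀ)) Q *ᵥ Y) i) ^ 2) :
    ∀ k l : ℕ, 1 ≤ k → k < l → l < n →
      ∑ j, lam j * (Qhat k).eval (lam j) * (Qhat l).eval (lam j) * (u j ⬝ᵥ Y) ^ 2 = 0 :=
  stmt2_general X Y lam u hortho hspec Qhat hQmem hQmin
end

section
/- For every 1 ≤ k < n, define the moments m̂_j = Σ_{i=1}^n λ_i^{j+1} p̂_i² for j ∈ ℕ, let Ĥ be the k×k matrix with entries Ĥ_{r,s} = m̂_{r+s−1} (1 ≤ r,s ≤ k), and let Ĝ(x) be the (k+1)×(k+1) matrix whose entry in row r ≤ k and column s is m̂_{r+s−2} and whose last row is (1, x, x², …, x^k). Then det Ĥ ≠ 0 and the minimizing residual polynomial satisfies Q̂_k(x) = (−1)^k · det Ĝ(x) / det Ĥ for all x ∈ ℝ. -/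
/-!
With `w i = u i ⬝ᵥ Y`, the spectral decomposition turns the objective into the discrete weighted
norm `‖Q(XXᵀ)Y‖² = ∑ i, Q(λᵢ)² wᵢ²`, which is definite on polynomials of degree `< n` since the
`n` nodes `λᵢ` are distinct and `wᵢ ≠ 0`. Expanding `det Ĝ(x)` along its last row gives a
polynomial `P` of degree `≤ k` with `P(0) = (-1)ᵏ det Ĥ`. Against the functional
`R ↦ ∑ i, λᵢ R(λᵢ) wᵢ²`, whose moments are the `m̂ⱼ`, the polynomial `Xᵗ P` evaluates to the
determinant of `Ĝ` with its last row replaced by row `t`, which is zero for `t < k`. So `P` is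
orthogonal to every `D` with `deg D ≤ k` and `D(0) = 0`, and by Pythagoras the normalised `P`
is the unique minimiser. Finally `vᵀ Ĥ v = ∑ i, F(λᵢ)² wᵢ²` for `F = ∑ r, v_r X^(r+1)`, so
`det Ĥ ≠ 0`.
-/

open Matrix Polynomial

section Spectral

variable {ι : Type*} [Fintype ι] [DecidableEq ι]

lemma sum_smul_vecMulVec_self_eq (lam : ι → ℝ) (u : ι → ι → ℝ) :
    ∑ i, lam i • vecMulVec (u i) (u i) = (of u)ᵀ * diagonal lam * of u := by
  ext a b
  simp only [Matrix.sum_apply, Matrix.smul_apply, vecMulVec_apply, smul_eq_mul, mul_apply,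
    transpose_apply, of_apply, diagonal_apply, mul_ite, mul_zero, Finset.sum_ite_eq',
    Finset.mem_univ, ↓reduceIte]
  exact Finset.sum_congr rfl fun i _ => by ring

lemma aeval_diagonal (d : ι → ℝ) (Q : ℝ[X]) :
    aeval (diagonal d) Q = diagonal fun i => Q.eval (d i) := by
  rw [← diagonalAlgHom_apply (R := ℝ), aeval_algHom_apply, diagonalAlgHom_apply]
  congr 1
  ext i
  simp [aeval_fn_apply]

lemma aeval_transpose_mul_diagonal_mul {U : Matrix ι ι ℝ} (hU : U * Uᵀ = 1) (d : ι → ℝ)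
    (Q : ℝ[X]) :
    aeval (Uᵀ * diagonal d * U) Q = Uᵀ * diagonal (fun i => Q.eval (d i)) * U := by
  have hU' : Uᵀ ∈ unitary (Matrix ι ι ℝ) := by
    rw [Unitary.mem_iff, star_eq_conjTranspose, conjTranspose_eq_transpose_of_trivial,
      transpose_transpose]
    exact ⟨hU, mul_eq_one_comm.mp hU⟩
  have hconj := congrArg (· Q) <|
    aeval_algEquiv (Unitary.conjStarAlgAut ℝ _ ⟨Uᵀ, hU'⟩).toAlgEquiv (diagonal d)
  simpa [star_eq_conjTranspose, aeval_diagonal] using hconj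

lemma sum_sq_transpose_mulVec {U : Matrix ι ι ℝ} (hU : U * Uᵀ = 1) (z : ι → ℝ) :
    ∑ j, (Uᵀ *ᵥ z) j ^ 2 = ∑ i, z i ^ 2 := by
  simp only [sq]
  change (Uᵀ *ᵥ z) ⬝ᵥ (Uᵀ *ᵥ z) = z ⬝ᵥ z
  rw [mulVec_transpose, dotProduct_comm, ← dotProduct_mulVec, mulVec_vecMul, hU, one_mulVec]

lemma sum_sq_aeval_mulVec_of_orthonormal {lam : ι → ℝ} {u : ι → ι → ℝ}
    (hortho : ∀ i j, u i ⬝ᵥ u j = if i = j then (1 : ℝ) else 0) (Q : ℝ[X]) (Y : ι → ℝ) :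
    ∑ j, ((aeval (∑ i, lam i • vecMulVec (u i) (u i)) Q *ᵥ Y) j) ^ 2
      = ∑ i, (Q.eval (lam i)) ^ 2 * (u i ⬝ᵥ Y) ^ 2 := by
  have hU : of u * (of u)ᵀ = 1 := by
    ext i j
    simpa [mul_apply, one_apply, dotProduct] using hortho i j
  rw [sum_smul_vecMulVec_self_eq, aeval_transpose_mul_diagonal_mul hU, ← mulVec_mulVec,
    ← mulVec_mulVec, sum_sq_transpose_mulVec hU]
  simp only [mulVec_diagonal, mul_pow]
  rfl

end Spectral

section BorderedHankel

variable {R : Type*} [CommRing R] (m : ℕ → R) (k : ℕ)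

def borderedHankel (v : Fin (k + 1) → R) : Matrix (Fin (k + 1)) (Fin (k + 1)) R :=
  of fun r s => if (r : ℕ) < k then m (r + s) else v s

def borderedHankelCofactor (s : Fin (k + 1)) : R :=
  (-1) ^ (k + (s : ℕ)) * det (of fun r t : Fin k => m (r + s.succAbove t))

lemma det_borderedHankel (v : Fin (k + 1) → R) :
    det (borderedHankel m k v) = ∑ s, v s * borderedHankelCofactor m k s := by
  rw [det_succ_row _ (Fin.last k)]
  refine Finset.sum_congr rfl fun s _ => ?_
  simp only [Fin.val_last, borderedHankel, of_apply, lt_self_iff_false, ↓reduceIte, submatrix,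
    Fin.succAbove_last, Fin.val_castSucc, Fin.is_lt, borderedHankelCofactor]
  ring

lemma borderedHankelCofactor_zero :
    borderedHankelCofactor m k 0 = (-1) ^ k * det (of fun r s : Fin k => m (r + s + 1)) := by
  simp [borderedHankelCofactor, add_assoc]

lemma sum_mul_borderedHankelCofactor_eq_zero {t : ℕ} (ht : t < k) :
    ∑ s : Fin (k + 1), m (t + s) * borderedHankelCofactor m k s = 0 := by
  rw [← det_borderedHankel]
  refine det_zero_of_row_eq (i := ⟨t, by omega⟩) (j := Fin.last k)
    (by simp [Fin.ext_iff]; omega) ?_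
  ext s
  simp [borderedHankel, ht]

noncomputable def borderedHankelPoly : R[X] :=
  ∑ s, C (borderedHankelCofactor m k s) * X ^ (s : ℕ)

lemma eval_borderedHankelPoly (x : R) :
    (borderedHankelPoly m k).eval x = det (borderedHankel m k fun s => x ^ (s : ℕ)) := by
  rw [det_borderedHankel]
  simp only [borderedHankelPoly, eval_finsetSum, eval_mul, eval_C, eval_pow, eval_X, mul_comm]

lemma natDegree_borderedHankelPoly_le : (borderedHankelPoly m k).natDegree ≤ k :=
  natDegree_sum_le_of_forall_le _ _ fun s _ =>
    (natDegree_C_mul_X_pow_le _ _).trans (Nat.lt_succ_iff.mp s.is_lt)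

lemma eval_zero_borderedHankelPoly :
    (borderedHankelPoly m k).eval 0 = borderedHankelCofactor m k 0 := by
  simp [borderedHankelPoly, eval_finsetSum, Fin.sum_univ_succ]

end BorderedHankel

section WeightedNodes

variable {ι : Type*} [Fintype ι] (x w : ι → ℝ)

def moment (j : ℕ) : ℝ := ∑ i, x i ^ (j + 1) * w i ^ 2

lemma eq_zero_of_sum_sq_eval_mul_sq_eq_zero (hx : Function.Injective x) (hw : ∀ i, w i ≠ 0)
    {F : ℝ[X]} (hF : F.natDegree < Fintype.card ι) (h : ∑ i, F.eval (x i) ^ 2 * w i ^ 2 = 0) :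
    F = 0 := by
  refine eq_zero_of_natDegree_lt_card_of_eval_eq_zero F hx (fun i => ?_) hF
  have hi := (Finset.sum_eq_zero_iff_of_nonneg fun i _ => by positivity).mp h i
    (Finset.mem_univ i)
  simpa [hw i] using hi

lemma eq_of_sum_sq_eval_mul_sq_le (hx : Function.Injective x) (hw : ∀ i, w i ≠ 0)
    {P Q : ℝ[X]} (hdeg : (Q - P).natDegree < Fintype.card ι)
    (horth : ∑ i, (Q - P).eval (x i) * P.eval (x i) * w i ^ 2 = 0)
    (hle : ∑ i, Q.eval (x i) ^ 2 * w i ^ 2 ≤ ∑ i, P.eval (x i) ^ 2 * w i ^ 2) : Q = P := by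
  have hpyth : ∑ i, Q.eval (x i) ^ 2 * w i ^ 2 = ∑ i, P.eval (x i) ^ 2 * w i ^ 2
      + ∑ i, (Q - P).eval (x i) ^ 2 * w i ^ 2
      + 2 * ∑ i, (Q - P).eval (x i) * P.eval (x i) * w i ^ 2 := by
    simp only [Finset.mul_sum, ← Finset.sum_add_distrib, eval_sub]
    exact Finset.sum_congr rfl fun i _ => by ring
  have hnonneg : 0 ≤ ∑ i, (Q - P).eval (x i) ^ 2 * w i ^ 2 :=
    Finset.sum_nonneg fun i _ => by positivity
  exact sub_eq_zero.mp <| eq_zero_of_sum_sq_eval_mul_sq_eq_zero x w hx hw hdeg (by linarith)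

lemma det_hankel_moments_ne_zero (hx : Function.Injective x) (hw : ∀ i, w i ≠ 0) {k : ℕ}
    (hkn : k < Fintype.card ι) : det (of fun r s : Fin k => moment x w (r + s + 1)) ≠ 0 := by
  intro hdet
  obtain ⟨v, hv0, hv⟩ := exists_mulVec_eq_zero_iff.mpr hdet
  set F : ℝ[X] := ∑ r : Fin k, C (v r) * X ^ (r + 1 : ℕ) with hF
  have hquad : v ⬝ᵥ (of fun r s : Fin k => moment x w (r + s + 1)) *ᵥ v
      = ∑ i, F.eval (x i) ^ 2 * w i ^ 2 := by
    simp only [hF, moment, dotProduct, mulVec, of_apply, eval_finsetSum, eval_mul, eval_C,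
      eval_pow, eval_X, sq, Finset.mul_sum, Finset.sum_mul]
    conv_rhs => rw [Finset.sum_comm]
    refine Finset.sum_congr rfl fun r _ => ?_
    rw [Finset.sum_comm]
    refine Finset.sum_congr rfl fun s _ => Finset.sum_congr rfl fun i _ => ?_
    ring
  have hF0 : F = 0 := by
    refine eq_zero_of_sum_sq_eval_mul_sq_eq_zero x w hx hw ?_ (by rw [← hquad, hv, dotProduct_zero])
    exact (natDegree_sum_le_of_forall_le _ _ fun r _ =>
      (natDegree_C_mul_X_pow_le _ _).trans r.is_lt).trans_lt hkn
  refine hv0 (funext fun r => ?_)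
  have := congrArg (coeff · (r + 1 : ℕ)) hF0
  simpa [hF, finsetSum_coeff, coeff_X_pow, Fin.val_inj] using this

lemma sum_pow_mul_eval_borderedHankelPoly_eq_zero {k t : ℕ} (ht : t < k) :
    ∑ i, x i ^ (t + 1) * (borderedHankelPoly (moment x w) k).eval (x i) * w i ^ 2 = 0 :=
  calc ∑ i, x i ^ (t + 1) * (borderedHankelPoly (moment x w) k).eval (x i) * w i ^ 2
      = ∑ s : Fin (k + 1), moment x w (t + s) * borderedHankelCofactor (moment x w) k s := by
        simp only [borderedHankelPoly, moment, eval_finsetSum, eval_mul, eval_C, eval_pow, eval_X,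
          Finset.mul_sum, Finset.sum_mul]
        rw [Finset.sum_comm]
        refine Finset.sum_congr rfl fun s _ => Finset.sum_congr rfl fun i _ => ?_
        ring
    _ = 0 := sum_mul_borderedHankelCofactor_eq_zero _ _ ht

lemma sum_eval_mul_eval_borderedHankelPoly_eq_zero {k : ℕ} {D : ℝ[X]} (hD : D.natDegree ≤ k)
    (hD0 : D.eval 0 = 0) :
    ∑ i, D.eval (x i) * (borderedHankelPoly (moment x w) k).eval (x i) * w i ^ 2 = 0 := by
  simp only [eval_eq_sum_range' (Nat.lt_succ_of_le hD), Finset.sum_mul]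
  rw [Finset.sum_comm]
  refine Finset.sum_eq_zero fun t ht => ?_
  obtain _ | t := t
  · simp [coeff_zero_eq_eval_zero, hD0]
  · have hlow := sum_pow_mul_eval_borderedHankelPoly_eq_zero x w
      (Nat.succ_lt_succ_iff.mp (Finset.mem_range.mp ht))
    rw [← mul_eq_zero_of_right (D.coeff (t + 1)) hlow, Finset.mul_sum]
    exact Finset.sum_congr rfl fun i _ => by ring

end WeightedNodes

theorem stmt3_general {n p : ℕ} (X : Matrix (Fin n) (Fin p) ℝ) (Y : Fin n → ℝ)
    (lam : Fin n → ℝ) (u : Fin n → Fin n → ℝ)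
    (hortho : ∀ i j, u i ⬝ᵥ u j = if i = j then (1 : ℝ) else 0)
    (hspec : X * Xᵀ = ∑ i, lam i • vecMulVec (u i) (u i))
    (hanti : StrictAnti lam)
    (hphat : ∀ i, u i ⬝ᵥ Y ≠ 0)
    (Qhat : ℕ → Polynomial ℝ)
    (hQmem : ∀ k, 1 ≤ k → k < n → (Qhat k).natDegree ≤ k ∧ (Qhat k).eval 0 = 1)
    (hQmin : ∀ k, 1 ≤ k → k < n → ∀ Q : Polynomial ℝ, Q.natDegree ≤ k → Q.eval 0 = 1 →
      ∑ i, (((Polynomial.aeval (X * Xᵀ)) (Qhat k) *ᵥ Y) i) ^ 2 ≤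
        ∑ i, (((Polynomial.aeval (X * Xᵀ)) Q *ᵥ Y) i) ^ 2)
    (k : ℕ) (hk1 : 1 ≤ k) (hkn : k < n) :
    let mhat : ℕ → ℝ := fun j => ∑ i, lam i ^ (j + 1) * (u i ⬝ᵥ Y) ^ 2
    let H : Matrix (Fin k) (Fin k) ℝ := fun r s => mhat ((r : ℕ) + (s : ℕ) + 1)
    let G : ℝ → Matrix (Fin (k + 1)) (Fin (k + 1)) ℝ := fun x r s =>
      if (r : ℕ) < k then mhat ((r : ℕ) + (s : ℕ)) else x ^ (s : ℕ)
    H.det ≠ 0 ∧ ∀ x : ℝ, (Qhat k).eval x = (-1 : ℝ) ^ k * (G x).det / H.det := by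
  intro mhat H G
  set w : Fin n → ℝ := fun i => u i ⬝ᵥ Y
  have hH : H.det ≠ 0 :=
    det_hankel_moments_ne_zero lam w hanti.injective hphat (by simpa using hkn)
  set P : ℝ[X] := C ((-1) ^ k / H.det) * borderedHankelPoly (moment lam w) k
  have hP_eval (x : ℝ) : P.eval x = (-1) ^ k * (G x).det / H.det := by
    rw [eval_mul, eval_C, eval_borderedHankelPoly, div_mul_eq_mul_div]
    rfl
  have hP0 : P.eval 0 = 1 := by
    rw [eval_mul, eval_C, eval_zero_borderedHankelPoly, borderedHankelCofactor_zero]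
    field_simp
    rw [← pow_mul, pow_mul', neg_one_sq, one_pow, one_mul]
    rfl
  have hPdeg : P.natDegree ≤ k :=
    (natDegree_C_mul_le _ _).trans (natDegree_borderedHankelPoly_le _ _)
  obtain ⟨hQdeg, hQ0⟩ := hQmem k hk1 hkn
  have hmin := hQmin k hk1 hkn P hPdeg hP0
  rw [hspec, sum_sq_aeval_mulVec_of_orthonormal hortho,
    sum_sq_aeval_mulVec_of_orthonormal hortho] at hmin
  have hDdeg : (Qhat k - P).natDegree ≤ k :=
    (natDegree_sub_le_of_le hQdeg hPdeg).trans (max_self k).le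
  have horth : ∑ i, (Qhat k - P).eval (lam i) * P.eval (lam i) * w i ^ 2 = 0 := by
    rw [← mul_eq_zero_of_right ((-1) ^ k / H.det) (sum_eval_mul_eval_borderedHankelPoly_eq_zero
      lam w hDdeg (by rw [eval_sub, hQ0, hP0, sub_self])), Finset.mul_sum]
    exact Finset.sum_congr rfl fun i _ => by rw [eval_mul, eval_C]; ring
  have hQP : Qhat k = P :=
    eq_of_sum_sq_eval_mul_sq_le lam w hanti.injective hphat
      (by simpa using hDdeg.trans_lt hkn) horth hmin
  exact ⟨hH, fun x => hQP ▸ hP_eval x⟩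

/-- With moments m̂_j = Σ_i λ_i^{j+1} p̂_i², Hankel-type matrices
Ĥ_{r,s} = m̂_{r+s−1} (k×k) and Ĝ(x) with rows of moments and last row (1, x, …, x^k),
we have det Ĥ ≠ 0 and Q̂_k(x) = (−1)^k det Ĝ(x) / det Ĥ. -/
theorem stmt3 {n p : ℕ} (X : Matrix (Fin n) (Fin p) ℝ) (Y : Fin n → ℝ)
    (lam : Fin n → ℝ) (u : Fin n → Fin n → ℝ)
    (hortho : ∀ i j, u i ⬝ᵥ u j = if i = j then (1 : ℝ) else 0)
    (hspec : X * Xᵀ = ∑ i, lam i • vecMulVec (u i) (u i))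
    (hanti : StrictAnti lam) (hpos : ∀ i, 0 < lam i)
    (hphat : ∀ i, u i ⬝ᵥ Y ≠ 0)
    (Qhat : ℕ → Polynomial ℝ)
    (hQmem : ∀ k, 1 ≤ k → k < n → (Qhat k).natDegree ≤ k ∧ (Qhat k).eval 0 = 1)
    (hQmin : ∀ k, 1 ≤ k → k < n → ∀ Q : Polynomial ℝ, Q.natDegree ≤ k → Q.eval 0 = 1 →
      ∑ i, (((Polynomial.aeval (X * Xᵀ)) (Qhat k) *ᵥ Y) i) ^ 2 ≤
        ∑ i, (((Polynomial.aeval (X * Xᵀ)) Q *ᵥ Y) i) ^ 2)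
    (k : ℕ) (hk1 : 1 ≤ k) (hkn : k < n) :
    let mhat : ℕ → ℝ := fun j => ∑ i, lam i ^ (j + 1) * (u i ⬝ᵥ Y) ^ 2
    let H : Matrix (Fin k) (Fin k) ℝ := fun r s => mhat ((r : ℕ) + (s : ℕ) + 1)
    let G : ℝ → Matrix (Fin (k + 1)) (Fin (k + 1)) ℝ := fun x r s =>
      if (r : ℕ) < k then mhat ((r : ℕ) + (s : ℕ)) else x ^ (s : ℕ)
    H.det ≠ 0 ∧ ∀ x : ℝ, (Qhat k).eval x = (-1 : ℝ) ^ k * (G x).det / H.det :=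
  stmt3_general X Y lam u hortho hspec hanti hphat Qhat hQmem hQmin k hk1 hkn
end

section
/- For every 1 ≤ k < n and every 1 ≤ i ≤ n, the minimizing residual polynomial satisfies Q̂_k(λ_i) = (−1)^k · [Σ_{(j_1,…,j_k)∈I_{k,i}} p̂_{j_1}²⋯p̂_{j_k}² · V(λ_{j_1},…,λ_{j_k},λ_i) · λ_{j_1}¹ λ_{j_2}² ⋯ λ_{j_k}^k] / [Σ_{(j_1,…,j_k)∈I_k} p̂_{j_1}²⋯p̂_{j_k}² · V(λ_{j_1},…,λ_{j_k}) · λ_{j_1}² λ_{j_2}³ ⋯ λ_{j_k}^{k+1}], where I_k is the set of k-tuples of pairwise distinct indices from {1,…,n} and I_{k,i} is the set of k-tuples of pairwise distinct indices from {1,…,n} all different from i. -/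
open Matrix Polynomial Finset

/-!
Writing `Y` in the eigenbasis gives `‖Q(XXᵀ)Y‖² = ∑ᵢ wᵢ Q(λᵢ)²` with `wᵢ = p̂ᵢ²`. If `P` has
degree `≤ k`, `P(0) = 1` and `∑ᵢ wᵢ λᵢᵐ P(λᵢ) = 0` for `1 ≤ m ≤ k`, then `Q̂_k - P` is a
combination of `λ, …, λᵏ`, hence orthogonal to `P`, and Pythagoras with the minimality of
`Q̂_k` forces `Q̂_k(λᵢ) = P(λᵢ)` for all `i`.

The polynomial `x ↦ ∑_j ∏_l w_{j_l} λ_{j_l}^{l+1} · V(λ_{j_1}, …, λ_{j_k}, x)` has these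
orthogonality relations: multiplied by `wᵢ λᵢᵐ` and summed over `i`, it becomes the multilinear
expansion of the moment determinant `det (∑ᵢ wᵢ λᵢ^(e_r + s))` for `e = (1, …, k, m)`, which has
two equal rows. Its value at `0` is `(-1)ᵏ` times the determinant of the Gram matrix
`(∑ᵢ wᵢ λᵢ^(r + s + 2))_{r,s<k}`, which is positive definite since `k < n` and the `λᵢ` are
distinct. Normalising it therefore gives `Q̂_k`; restricting both sums to injective tuples only
drops vanishing Vandermonde factors.
-/

/-- Vandermonde product V(x_1,…,x_m) = ∏_{q<r} (x_r − x_q). -/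
def vand {m : ℕ} (x : Fin m → ℝ) : ℝ :=
  ∏ r : Fin m, ∏ q ∈ Finset.univ.filter (fun q => q < r), (x r - x q)

lemma vand_eq_det_vandermonde {m : ℕ} (x : Fin m → ℝ) : vand x = (vandermonde x).det := by
  rw [det_vandermonde]
  exact prod_comm' fun r q => by simp [mem_Ioi]

lemma vand_eq_zero_of_not_injective {m : ℕ} {x : Fin m → ℝ} (hx : ¬ Function.Injective x) :
    vand x = 0 := by
  by_contra h
  exact hx (det_vandermonde_ne_zero_iff.mp (vand_eq_det_vandermonde x ▸ h))

lemma vand_snoc {m : ℕ} (y : Fin m → ℝ) (a : ℝ) :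
    vand (Fin.snoc y a) = vand y * ∏ l, (a - y l) := by
  unfold vand
  rw [Fin.prod_univ_castSucc]
  congr 1
  · refine prod_congr rfl fun r _ => ?_
    rw [prod_filter, Fin.prod_univ_castSucc, prod_filter]
    simp [Fin.castSucc_lt_castSucc_iff, (Fin.castSucc_lt_last _).not_gt]
  · rw [prod_filter, Fin.prod_univ_castSucc]
    simp [Fin.castSucc_lt_last]

lemma det_of_sum_smul {R ι : Type*} [CommRing R] [Fintype ι] {m : ℕ} (c : Fin m → ι → R)
    (v : ι → Fin m → R) :
    (of fun r => ∑ i, c r i • v i).det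
      = ∑ J : Fin m → ι, (∏ r, c r (J r)) * (of fun r => v (J r)).det := by
  have h := (detRowAlternating : (Fin m → R) [⋀^Fin m]→ₗ[R] R).toMultilinearMap.map_sum
    (fun r i => c r i • v i)
  simp only [AlternatingMap.coe_multilinearMap, AlternatingMap.map_smul_univ] at h
  exact h

lemma det_moment_eq_sum {ι : Type*} [Fintype ι] {m : ℕ} (w lam : ι → ℝ) (e : Fin m → ℕ) :
    (of fun r s : Fin m => ∑ i, w i * lam i ^ (e r + s)).det
      = ∑ J : Fin m → ι, (∏ r, w (J r) * lam (J r) ^ e r) * vand (fun r => lam (J r)) := by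
  have h : (of fun r s : Fin m => ∑ i, w i * lam i ^ (e r + s))
      = of fun r => ∑ i, (w i * lam i ^ e r) • fun s : Fin m => lam i ^ (s : ℕ) := by
    ext r s
    simp [Finset.sum_apply, pow_add, mul_assoc]
  simp only [h, det_of_sum_smul, vand_eq_det_vandermonde]
  rfl

section Orthonormal

variable {ι : Type*} [Fintype ι] [DecidableEq ι] {u : ι → ι → ℝ}

lemma sum_smul_vecMulVec_mulVec (hu : ∀ i j, u i ⬝ᵥ u j = if i = j then 1 else 0)
    (lam : ι → ℝ) (j : ι) :
    (∑ i, lam i • vecMulVec (u i) (u i)) *ᵥ u j = lam j • u j := by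
  simp [sum_mulVec, smul_mulVec, vecMulVec_mulVec, hu]

lemma aeval_sum_smul_vecMulVec_mulVec (hu : ∀ i j, u i ⬝ᵥ u j = if i = j then 1 else 0)
    (lam : ι → ℝ) (Q : ℝ[X]) (j : ι) :
    aeval (∑ i, lam i • vecMulVec (u i) (u i)) Q *ᵥ u j = Q.eval (lam j) • u j := by
  have h := Module.End.aeval_apply_of_mem_apply_eq_smul (p := Q)
    (f := toLinAlgEquiv' (∑ i, lam i • vecMulVec (u i) (u i)))
    (sum_smul_vecMulVec_mulVec hu lam j)
  rwa [aeval_algHom_apply] at h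

lemma eq_sum_dotProduct_smul (hu : ∀ i j, u i ⬝ᵥ u j = if i = j then 1 else 0) (Y : ι → ℝ) :
    Y = ∑ j, (u j ⬝ᵥ Y) • u j := by
  have hrows : of u * (of u)ᵀ = 1 := by
    ext i j; simpa [mul_apply, one_apply, dotProduct] using hu i j
  have hcols := congrArg (· *ᵥ Y) (mul_eq_one_comm.mp hrows)
  simp only [← mulVec_mulVec, one_mulVec] at hcols
  conv_lhs => rw [← hcols]
  ext a
  simp [mulVec, dotProduct, Finset.sum_apply, mul_comm]

lemma sum_smul_dotProduct_sum_smul (hu : ∀ i j, u i ⬝ᵥ u j = if i = j then 1 else 0)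
    (a b : ι → ℝ) :
    (∑ j, a j • u j) ⬝ᵥ (∑ j, b j • u j) = ∑ j, a j * b j := by
  simp [sum_dotProduct, dotProduct_sum, hu, mul_comm]

lemma sum_sq_aeval_sum_smul_vecMulVec_mulVec (hu : ∀ i j, u i ⬝ᵥ u j = if i = j then 1 else 0)
    (lam : ι → ℝ) (Q : ℝ[X]) (Y : ι → ℝ) :
    ∑ a, (aeval (∑ i, lam i • vecMulVec (u i) (u i)) Q *ᵥ Y) a ^ 2
      = ∑ i, (u i ⬝ᵥ Y) ^ 2 * Q.eval (lam i) ^ 2 := by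
  set A := ∑ i, lam i • vecMulVec (u i) (u i)
  have hexpand : aeval A Q *ᵥ Y = ∑ j, ((u j ⬝ᵥ Y) * Q.eval (lam j)) • u j := by
    conv_lhs => rw [eq_sum_dotProduct_smul hu Y]
    simp only [A, mulVec_sum, mulVec_smul, aeval_sum_smul_vecMulVec_mulVec hu, smul_smul]
  calc ∑ a, (aeval A Q *ᵥ Y) a ^ 2 = (aeval A Q *ᵥ Y) ⬝ᵥ (aeval A Q *ᵥ Y) := by
        simp only [dotProduct, sq]
    _ = ∑ i, (u i ⬝ᵥ Y) ^ 2 * Q.eval (lam i) ^ 2 := by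
        rw [hexpand, sum_smul_dotProduct_sum_smul hu]
        exact sum_congr rfl fun i _ => by ring

end Orthonormal

section LeastSquares

variable {ι : Type*} [Fintype ι] (w lam : ι → ℝ) {k : ℕ}

lemma sum_mul_eval_mul_eval_eq_zero {D P : ℝ[X]} (hD : D.natDegree ≤ k) (hD0 : D.eval 0 = 0)
    (hP : ∀ m, 1 ≤ m → m ≤ k → ∑ i, w i * lam i ^ m * P.eval (lam i) = 0) :
    ∑ i, w i * D.eval (lam i) * P.eval (lam i) = 0 := by
  have hcoeff : ∀ m ∈ range (k + 1), D.coeff m * ∑ i, w i * lam i ^ m * P.eval (lam i) = 0 := by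
    intro m hm
    rcases Nat.eq_zero_or_pos m with rfl | hm0
    · rw [coeff_zero_eq_eval_zero, hD0, zero_mul]
    · rw [hP m hm0 (Nat.lt_succ_iff.mp (mem_range.mp hm)), mul_zero]
  calc ∑ i, w i * D.eval (lam i) * P.eval (lam i)
      = ∑ i, ∑ m ∈ range (k + 1), D.coeff m * (w i * lam i ^ m * P.eval (lam i)) := by
        refine sum_congr rfl fun i _ => ?_
        rw [eval_eq_sum_range' (Nat.lt_succ_of_le hD), mul_sum, sum_mul]
        exact sum_congr rfl fun m _ => by ring
    _ = 0 := by
        rw [sum_comm]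
        exact sum_eq_zero fun m hm => by rw [← mul_sum]; exact hcoeff m hm

variable {w lam}

lemma eval_eq_div_eval_zero_of_isMinimizer (hw : ∀ i, 0 < w i) {Q P : ℝ[X]}
    (hQ : Q.natDegree ≤ k) (hQ0 : Q.eval 0 = 1)
    (hQmin : ∀ R : ℝ[X], R.natDegree ≤ k → R.eval 0 = 1 →
      ∑ i, w i * Q.eval (lam i) ^ 2 ≤ ∑ i, w i * R.eval (lam i) ^ 2)
    (hP : P.natDegree ≤ k) (hP0 : P.eval 0 ≠ 0)
    (hPorth : ∀ m, 1 ≤ m → m ≤ k → ∑ i, w i * lam i ^ m * P.eval (lam i) = 0) (i : ι) :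
    Q.eval (lam i) = P.eval (lam i) / P.eval 0 := by
  set R := C (P.eval 0)⁻¹ * P
  have hR : R.natDegree ≤ k := (natDegree_C_mul_le _ _).trans hP
  have hR0 : R.eval 0 = 1 := by simp [R, hP0]
  have hRorth : ∀ m, 1 ≤ m → m ≤ k → ∑ i, w i * lam i ^ m * R.eval (lam i) = 0 := fun m h1 h2 => by
    simp only [R, eval_mul, eval_C, mul_left_comm _ (P.eval 0)⁻¹, ← mul_sum, hPorth m h1 h2,
      mul_zero]
  set D := Q - R
  have hcross : ∑ i, w i * D.eval (lam i) * R.eval (lam i) = 0 :=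
    sum_mul_eval_mul_eval_eq_zero w lam ((natDegree_sub_le _ _).trans (max_le hQ hR))
      (by simp [D, hQ0, hR0]) hRorth
  have hpyth : ∑ i, w i * Q.eval (lam i) ^ 2
      = ∑ i, w i * R.eval (lam i) ^ 2 + ∑ i, w i * D.eval (lam i) ^ 2 := by
    have hexpand : ∀ i, w i * Q.eval (lam i) ^ 2 = w i * R.eval (lam i) ^ 2
        + w i * D.eval (lam i) ^ 2 + 2 * (w i * D.eval (lam i) * R.eval (lam i)) := fun i => by
      simp only [D, eval_sub]; ring
    rw [sum_congr rfl fun i _ => hexpand i, sum_add_distrib, sum_add_distrib, ← mul_sum, hcross,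
      mul_zero, add_zero]
  have hD : ∑ i, w i * D.eval (lam i) ^ 2 = 0 := le_antisymm
    (by linarith [hQmin R hR hR0]) (sum_nonneg fun i _ => by have := hw i; positivity)
  have hDi := (sum_eq_zero_iff_of_nonneg fun i _ => by have := hw i; positivity).mp hD i
    (mem_univ i)
  have : D.eval (lam i) = 0 := by simpa [(hw i).ne'] using hDi
  simpa [D, R, sub_eq_zero, div_eq_inv_mul] using this

end LeastSquares

section ResidualPoly

variable {ι : Type*} [Fintype ι] (k : ℕ) (w lam : ι → ℝ)

noncomputable def residualPoly : ℝ[X] :=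
  ∑ j : Fin k → ι, C ((∏ l, w (j l) * lam (j l) ^ ((l : ℕ) + 1)) * vand (fun l => lam (j l))) *
    ∏ l, (X - C (lam (j l)))

lemma natDegree_residualPoly_le : (residualPoly k w lam).natDegree ≤ k := by
  refine natDegree_sum_le_of_forall_le _ _ fun j _ => (natDegree_C_mul_le _ _).trans ?_
  refine (natDegree_prod_le _ _).trans ?_
  simp

lemma eval_residualPoly (x : ℝ) :
    (residualPoly k w lam).eval x
      = ∑ j : Fin k → ι,
          (∏ l, w (j l) * lam (j l) ^ ((l : ℕ) + 1)) * vand (Fin.snoc (fun l => lam (j l)) x) := by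
  simp only [residualPoly, eval_finsetSum, eval_mul, eval_C, eval_prod, eval_sub, eval_X,
    vand_snoc, mul_assoc]

lemma sum_mul_pow_mul_eval_residualPoly_eq_zero {m : ℕ} (hm : 1 ≤ m) (hmk : m ≤ k) :
    ∑ i, w i * lam i ^ m * (residualPoly k w lam).eval (lam i) = 0 := by
  set e : Fin (k + 1) → ℕ := Fin.snoc (fun l : Fin k => (l : ℕ) + 1) m
  have hrows : (of fun r s : Fin (k + 1) => ∑ i, w i * lam i ^ (e r + s)).det = 0 := by
    refine det_zero_of_row_eq (i := (⟨m - 1, by omega⟩ : Fin k).castSucc) (j := Fin.last k)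
      (Fin.castSucc_lt_last _).ne ?_
    ext s
    simp only [of_apply, e, Fin.snoc_castSucc, Fin.snoc_last]
    rw [Nat.sub_add_cancel hm]
  rw [det_moment_eq_sum, ← (Fin.snocEquiv fun _ => ι).sum_comp, Fintype.sum_prod_type] at hrows
  rw [← hrows]
  refine sum_congr rfl fun i _ => ?_
  rw [eval_residualPoly, mul_sum]
  refine sum_congr rfl fun j _ => ?_
  have hcomp : (fun r => lam (Fin.snoc (α := fun _ => ι) j i r))
      = Fin.snoc (fun l => lam (j l)) (lam i) := by
    ext r; refine Fin.lastCases ?_ (fun l => ?_) r <;> simp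
  simp only [Fin.snocEquiv_apply, Fin.prod_univ_castSucc, Fin.snoc_castSucc, Fin.snoc_last, e,
    hcomp]
  ring

end ResidualPoly

section MomentMatrix

variable {ι : Type*} [Fintype ι] (k : ℕ) (w lam : ι → ℝ)

def momentMatrix : Matrix (Fin k) (Fin k) ℝ :=
  of fun r s => ∑ i, w i * lam i ^ ((r : ℕ) + 2 + s)

lemma eval_zero_residualPoly :
    (residualPoly k w lam).eval 0 = (-1) ^ k * (momentMatrix k w lam).det := by
  rw [eval_residualPoly, momentMatrix, det_moment_eq_sum, mul_sum]
  refine sum_congr rfl fun j _ => ?_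
  rw [vand_snoc]
  simp only [zero_sub, prod_neg, card_univ, Fintype.card_fin, pow_succ, prod_mul_distrib]
  ring

variable {k lam} in
lemma injective_mulVec_pow_succ (hlam : Function.Injective lam) (hk : k < Fintype.card ι) :
    Function.Injective (of fun i (s : Fin k) => lam i ^ ((s : ℕ) + 1)).mulVec := by
  refine (injective_iff_map_eq_zero (mulVecLin _)).mpr fun v hv => ?_
  set P : ℝ[X] := ∑ s : Fin k, C (v s) * X ^ ((s : ℕ) + 1)
  have hroots : ∀ i, P.eval (lam i) = 0 := fun i => by
    have hi := congrFun hv i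
    simp only [mulVecLin_apply, mulVec, dotProduct, of_apply, Pi.zero_apply] at hi
    simpa only [P, eval_finsetSum, eval_mul, eval_C, eval_pow, eval_X, mul_comm] using hi
  have hdeg : P.natDegree < Fintype.card ι :=
    (natDegree_sum_le_of_forall_le _ _ fun s _ =>
      (natDegree_C_mul_X_pow_le _ _).trans s.isLt).trans_lt hk
  have hP := eq_zero_of_natDegree_lt_card_of_eval_eq_zero P hlam hroots hdeg
  ext s
  simpa [P, finsetSum_coeff, coeff_C_mul, coeff_X_pow, Fin.val_inj] using
    congrArg (coeff · ((s : ℕ) + 1)) hP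

variable {k w lam} in
lemma det_momentMatrix_pos (hw : ∀ i, 0 < w i) (hlam : Function.Injective lam)
    (hk : k < Fintype.card ι) : 0 < (momentMatrix k w lam).det := by
  classical
  set B : Matrix ι (Fin k) ℝ := of fun i s => lam i ^ ((s : ℕ) + 1)
  have hgram : momentMatrix k w lam = Bᴴ * diagonal w * B := by
    ext r s
    simp only [momentMatrix, B, of_apply, mul_apply, diagonal_apply, conjTranspose_apply,
      star_trivial, mul_ite, mul_zero, sum_ite_eq', mem_univ, if_true]
    exact sum_congr rfl fun i _ => by ring
  rw [hgram]
  exact ((PosDef.diagonal hw).conjTranspose_mul_mul_same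
    (injective_mulVec_pow_succ hlam hk)).det_pos

variable {k lam} [DecidableEq ι]

lemma det_momentMatrix_eq_sum_injective :
    (momentMatrix k w lam).det
      = ∑ j ∈ univ.filter (fun j : Fin k → ι => Function.Injective j),
          (∏ l, w (j l)) * vand (fun l => lam (j l)) * ∏ l, lam (j l) ^ ((l : ℕ) + 2) := by
  rw [momentMatrix, det_moment_eq_sum, sum_filter_of_ne]
  · exact sum_congr rfl fun j _ => by rw [prod_mul_distrib]; ring
  · intro j _ hne
    by_contra hj
    exact hne (by
      rw [vand_eq_zero_of_not_injective (x := fun l => lam (j l)) fun h => hj h.of_comp]; ring)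

lemma eval_residualPoly_eq_sum_injective (i : ι) :
    (residualPoly k w lam).eval (lam i)
      = ∑ j ∈ univ.filter (fun j : Fin k → ι => Function.Injective j ∧ ∀ l, j l ≠ i),
          (∏ l, w (j l)) * vand (Fin.snoc (fun l => lam (j l)) (lam i)) *
            ∏ l, lam (j l) ^ ((l : ℕ) + 1) := by
  rw [eval_residualPoly, sum_filter_of_ne]
  · exact sum_congr rfl fun j _ => by rw [prod_mul_distrib]; ring
  · intro j _ hne
    by_contra hj
    have hsnoc : ¬ Function.Injective (Fin.snoc (fun l => lam (j l)) (lam i)) := fun h => by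
      rw [← Function.comp_def lam j, ← Fin.comp_snoc] at h
      obtain ⟨hj', hi⟩ := Fin.snoc_injective_iff.mp h.of_comp
      exact hj ⟨hj', fun l hl => hi ⟨l, hl⟩⟩
    exact hne (by rw [vand_eq_zero_of_not_injective hsnoc]; ring)

end MomentMatrix

open Classical in
theorem stmt4_general {n p : ℕ} (X : Matrix (Fin n) (Fin p) ℝ) (Y : Fin n → ℝ)
    (lam : Fin n → ℝ) (u : Fin n → Fin n → ℝ)
    (hortho : ∀ i j, u i ⬝ᵥ u j = if i = j then (1 : ℝ) else 0)
    (hspec : X * Xᵀ = ∑ i, lam i • vecMulVec (u i) (u i))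
    (hanti : StrictAnti lam)
    (hphat : ∀ i, u i ⬝ᵥ Y ≠ 0)
    (Qhat : ℕ → Polynomial ℝ)
    (hQmem : ∀ k, 1 ≤ k → k < n → (Qhat k).natDegree ≤ k ∧ (Qhat k).eval 0 = 1)
    (hQmin : ∀ k, 1 ≤ k → k < n → ∀ Q : Polynomial ℝ, Q.natDegree ≤ k → Q.eval 0 = 1 →
      ∑ i, (((Polynomial.aeval (X * Xᵀ)) (Qhat k) *ᵥ Y) i) ^ 2 ≤
        ∑ i, (((Polynomial.aeval (X * Xᵀ)) Q *ᵥ Y) i) ^ 2)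
    (k : ℕ) (hk1 : 1 ≤ k) (hkn : k < n) (i : Fin n) :
    (Qhat k).eval (lam i) =
      (-1 : ℝ) ^ k *
        (∑ j ∈ Finset.univ.filter
            (fun j : Fin k → Fin n => Function.Injective j ∧ ∀ l, j l ≠ i),
            (∏ l, (u (j l) ⬝ᵥ Y) ^ 2) * vand (Fin.snoc (fun l => lam (j l)) (lam i)) *
              ∏ l, lam (j l) ^ ((l : ℕ) + 1)) /
        (∑ j ∈ Finset.univ.filter (fun j : Fin k → Fin n => Function.Injective j),
            (∏ l, (u (j l) ⬝ᵥ Y) ^ 2) * vand (fun l => lam (j l)) *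
              ∏ l, lam (j l) ^ ((l : ℕ) + 2)) := by
  set w : Fin n → ℝ := fun i => (u i ⬝ᵥ Y) ^ 2
  have hw : ∀ i, 0 < w i := fun i => sq_pos_iff.mpr (hphat i)
  obtain ⟨hdeg, h0⟩ := hQmem k hk1 hkn
  have hmin : ∀ R : ℝ[X], R.natDegree ≤ k → R.eval 0 = 1 →
      ∑ i, w i * (Qhat k).eval (lam i) ^ 2 ≤ ∑ i, w i * R.eval (lam i) ^ 2 := fun R hR hR0 => by
    simpa only [hspec, sum_sq_aeval_sum_smul_vecMulVec_mulVec hortho] using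
      hQmin k hk1 hkn R hR hR0
  have hdet := det_momentMatrix_pos hw hanti.injective (by simpa using hkn)
  rw [eval_eq_div_eval_zero_of_isMinimizer hw hdeg h0 hmin (natDegree_residualPoly_le k w lam)
      (by rw [eval_zero_residualPoly]; exact mul_ne_zero (pow_ne_zero _ (by norm_num)) hdet.ne')
      (fun m hm hmk => sum_mul_pow_mul_eval_residualPoly_eq_zero k w lam hm hmk),
    eval_residualPoly_eq_sum_injective, eval_zero_residualPoly,
    det_momentMatrix_eq_sum_injective]
  rw [← div_div, div_eq_mul_inv _ ((-1 : ℝ) ^ k), ← inv_pow, inv_neg_one]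
  ring

open Classical in
/-- explicit formula for Q̂_k(λ_i) as quotient of sums over tuples of
pairwise distinct indices, with Vandermonde determinants. -/
theorem stmt4 {n p : ℕ} (X : Matrix (Fin n) (Fin p) ℝ) (Y : Fin n → ℝ)
    (lam : Fin n → ℝ) (u : Fin n → Fin n → ℝ)
    (hortho : ∀ i j, u i ⬝ᵥ u j = if i = j then (1 : ℝ) else 0)
    (hspec : X * Xᵀ = ∑ i, lam i • vecMulVec (u i) (u i))
    (hanti : StrictAnti lam) (hpos : ∀ i, 0 < lam i)
    (hphat : ∀ i, u i ⬝ᵥ Y ≠ 0)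
    (Qhat : ℕ → Polynomial ℝ)
    (hQmem : ∀ k, 1 ≤ k → k < n → (Qhat k).natDegree ≤ k ∧ (Qhat k).eval 0 = 1)
    (hQmin : ∀ k, 1 ≤ k → k < n → ∀ Q : Polynomial ℝ, Q.natDegree ≤ k → Q.eval 0 = 1 →
      ∑ i, (((Polynomial.aeval (X * Xᵀ)) (Qhat k) *ᵥ Y) i) ^ 2 ≤
        ∑ i, (((Polynomial.aeval (X * Xᵀ)) Q *ᵥ Y) i) ^ 2)
    (k : ℕ) (hk1 : 1 ≤ k) (hkn : k < n) (i : Fin n) :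
    (Qhat k).eval (lam i) =
      (-1 : ℝ) ^ k *
        (∑ j ∈ Finset.univ.filter
            (fun j : Fin k → Fin n => Function.Injective j ∧ ∀ l, j l ≠ i),
            (∏ l, (u (j l) ⬝ᵥ Y) ^ 2) * vand (Fin.snoc (fun l => lam (j l)) (lam i)) *
              ∏ l, lam (j l) ^ ((l : ℕ) + 1)) /
        (∑ j ∈ Finset.univ.filter (fun j : Fin k → Fin n => Function.Injective j),
            (∏ l, (u (j l) ⬝ᵥ Y) ^ 2) * vand (fun l => lam (j l)) *
              ∏ l, lam (j l) ^ ((l : ℕ) + 2)) :=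
  stmt4_general X Y lam u hortho hspec hanti hphat Qhat hQmem hQmin k hk1 hkn i
end

section
/- For every 1 ≤ k < n and every 1 ≤ i ≤ n, the minimizing residual polynomial satisfies |Q̂_k(λ_i)| ≤ max_{(j_1,…,j_k)∈I_k^+} ∏_{l=1}^k |1 − λ_i/λ_{j_l}|. Consequently, if ε > 0 is such that |1 − λ_i/λ_j| ≤ ε for every 1 ≤ j ≤ n, then |Q̂_k(λ_i)| ≤ ε^k. -/
open Matrix Polynomial

/-!
Since `‖Q(XXᵀ)Y‖² = ∑ⱼ p̂ⱼ² Q(λⱼ)²`, minimality makes `Q̂ₖ` orthogonal to every polynomial of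
degree `< k` for the positive weights `p̂ⱼ² λⱼ`. Hence `Q̂ₖ` changes sign at least `k` times along
`λₙ < ⋯ < λ₁`: otherwise a polynomial `S` of degree `< k` vanishing once between consecutive sign
changes would make every `p̂ⱼ² λⱼ Q̂ₖ(λⱼ) S(λⱼ)` nonnegative and one of them positive. The
intermediate value theorem then yields roots `θ₁ < ⋯ < θₖ`, each bracketed by two consecutive
points of an alternating tuple, so `Q̂ₖ(x) = ∏ₛ (1 - x/θₛ)`, and each factor is dominated by the
factor at the bracket end lying beyond `θₛ` as seen from `λᵢ`.
-/

theorem sum_sq_aeval_mulVec_eq {ι : Type*} [Fintype ι] [DecidableEq ι]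
    (M : Matrix ι ι ℝ) (lam : ι → ℝ) (u : ι → ι → ℝ)
    (hortho : ∀ i j, u i ⬝ᵥ u j = if i = j then (1 : ℝ) else 0)
    (hspec : M = ∑ i, lam i • vecMulVec (u i) (u i)) (Q : ℝ[X]) (Y : ι → ℝ) :
    ∑ i, ((aeval M Q *ᵥ Y) i) ^ 2 = ∑ j, (u j ⬝ᵥ Y) ^ 2 * Q.eval (lam j) ^ 2 := by
  have hUUt : of u * (of u)ᵀ = 1 := by
    ext i j
    simpa [Matrix.mul_apply, Matrix.one_apply, dotProduct] using hortho i j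
  have hUt : (of u)ᵀ ∈ unitaryGroup ι ℝ := by
    rw [mem_unitaryGroup_iff, star_eq_conjTranspose, conjTranspose_eq_transpose_of_trivial,
      transpose_transpose]
    exact mul_eq_one_comm.mp hUUt
  have hM : M = Unitary.conjStarAlgAut ℝ _ ⟨(of u)ᵀ, hUt⟩ (diagonalAlgHom ℝ lam) := by
    ext a b
    rw [Unitary.conjStarAlgAut_apply, diagonalAlgHom_apply, star_eq_conjTranspose,
      conjTranspose_eq_transpose_of_trivial, transpose_transpose, Matrix.mul_apply, hspec]
    simp only [Matrix.sum_apply, Matrix.smul_apply, vecMulVec_apply, smul_eq_mul, mul_diagonal,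
      transpose_apply, of_apply]
    exact Finset.sum_congr rfl fun c _ => by ring
  have hQM : aeval M Q = (of u)ᵀ * diagonal (fun j => Q.eval (lam j)) * of u := by
    rw [hM, aeval_algHom_apply, aeval_algHom_apply, Unitary.conjStarAlgAut_apply,
      diagonalAlgHom_apply, star_eq_conjTranspose, conjTranspose_eq_transpose_of_trivial,
      transpose_transpose]
    congr
    funext j
    exact aeval_pi_apply₂ ..
  have hnorm : ∀ w : ι → ℝ, ∑ i, ((of u)ᵀ *ᵥ w) i ^ 2 = ∑ j, w j ^ 2 := by
    intro w
    have := dotProduct_mulVec ((of u)ᵀ *ᵥ w) (of u)ᵀ w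
    rw [vecMul_transpose, mulVec_mulVec, hUUt, one_mulVec] at this
    simpa [dotProduct, sq] using this
  rw [hQM, ← mulVec_mulVec, ← mulVec_mulVec, hnorm]
  refine Finset.sum_congr rfl fun j _ => ?_
  rw [mulVec_diagonal, mul_pow, mul_comm]
  rfl

theorem sum_mul_eval_mul_eval_eq_zero_of_isMin {ι : Type*} [Fintype ι] (w x : ι → ℝ) {k : ℕ}
    {Q : ℝ[X]} (hQ : Q.natDegree ≤ k) (hQ0 : Q.eval 0 = 1)
    (hmin : ∀ P : ℝ[X], P.natDegree ≤ k → P.eval 0 = 1 →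
      ∑ j, w j * Q.eval (x j) ^ 2 ≤ ∑ j, w j * P.eval (x j) ^ 2)
    {S : ℝ[X]} (hS : S.natDegree < k) :
    ∑ j, w j * x j * Q.eval (x j) * S.eval (x j) = 0 := by
  set b := ∑ j, w j * x j * Q.eval (x j) * S.eval (x j)
  set a := ∑ j, w j * (x j * S.eval (x j)) ^ 2
  have hquad : ∀ t : ℝ, 0 ≤ a * (t * t) + 2 * b * t + 0 := by
    intro t
    have hdeg : (Q + C t * (X * S)).natDegree ≤ k := by
      refine (natDegree_add_le _ _).trans (max_le hQ ?_)
      refine (natDegree_C_mul_le _ _).trans <| natDegree_mul_le.trans ?_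
      have := natDegree_X_le (R := ℝ)
      omega
    have h := hmin _ hdeg (by simp [hQ0])
    have hexp : ∑ j, w j * (Q + C t * (X * S)).eval (x j) ^ 2 =
        ∑ j, w j * Q.eval (x j) ^ 2 + (a * (t * t) + 2 * b * t) := by
      rw [Finset.sum_mul, Finset.mul_sum, Finset.sum_mul, ← Finset.sum_add_distrib,
        ← Finset.sum_add_distrib]
      refine Finset.sum_congr rfl fun j _ => ?_
      simp only [eval_add, eval_mul, eval_C, eval_X]
      ring
    linarith
  have := discrim_le_zero hquad
  rw [discrim] at this
  nlinarith [sq_nonneg b]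

theorem mul_neg_of_pos_of_mul_neg {R : Type*} [CommRing R] [LinearOrder R] [IsStrictOrderedRing R]
    {p q r : R} (hqp : 0 < q * p) (hrq : r * q < 0) : r * p < 0 := by
  have h : q * q * (r * p) < 0 := by
    rw [show q * q * (r * p) = (q * p) * (r * q) by ring]
    exact mul_neg_of_pos_of_neg hqp hrq
  exact neg_of_mul_neg_right h (mul_self_nonneg q)

/-- The last conjunct, saying that `S` has the sign of `g (y 0)` to the left of `y 0`, is the
invariant that lets the induction add a new minimum to `Z`. -/
theorem exists_alternating_and_sign_matching_polynomial (g : ℝ → ℝ) (Z : Finset ℝ) (hZ : Z.Nonempty)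
    (hg : ∀ x ∈ Z, g x ≠ 0) :
    ∃ (d : ℕ) (y : Fin (d + 1) → ℝ) (S : ℝ[X]), StrictMono y ∧ (∀ s, y s ∈ Z) ∧
      (∀ s : Fin d, g (y s.castSucc) * g (y s.succ) < 0) ∧ S.natDegree ≤ d ∧
      (∀ x ∈ Z, 0 < g x * S.eval x) ∧ ∀ x ≤ y 0, 0 < g (y 0) * S.eval x := by
  classical
  induction Z using Finset.induction_on_min with
  | empty => exact absurd hZ Finset.not_nonempty_empty
  | insert a Z ha ih =>
    obtain rfl | hZ' := Z.eq_empty_or_nonempty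
    · have hga := mul_self_pos.mpr (hg a (Finset.mem_insert_self a ∅))
      exact ⟨0, fun _ => a, C (g a), Subsingleton.strictMono (α := Fin 1) _, fun _ => by simp,
        fun s => s.elim0, by simp, by simpa using hga, fun _ _ => by simpa using hga⟩
    obtain ⟨d, y, S, hy, hyZ, halt, hSd, hSZ, hS0⟩ :=
      ih hZ' fun x hx => hg x (Finset.mem_insert_of_mem hx)
    have hay : ∀ s, a < y s := fun s => ha _ (hyZ s)
    have hSa := hS0 a (hay 0).le
    by_cases hpos : 0 < g a * S.eval a
    · refine ⟨d, y, S, hy, fun s => Finset.mem_insert_of_mem (hyZ s), halt, hSd, ?_, hS0⟩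
      simpa [hpos] using hSZ
    -- otherwise `a` extends the tuple, and a root `b` of `S` between `a` and `Z` fixes the sign
    have hneg : g a * S.eval a < 0 :=
      (not_lt.mp hpos).lt_of_ne (mul_ne_zero (hg a (Finset.mem_insert_self a Z))
        (right_ne_zero_of_mul hSa.ne'))
    have hga : g a * g (y 0) < 0 := mul_neg_of_pos_of_mul_neg (by rwa [mul_comm] at hSa) hneg
    obtain ⟨b, hab, hbZ⟩ := exists_between (ha _ (Z.min'_mem hZ'))
    replace hbZ : ∀ x ∈ Z, b < x := fun x hx => hbZ.trans_le (Z.min'_le x hx)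
    refine ⟨d + 1, Fin.cons a y, S * (X - C b), Fin.strictMono_cons.mpr ⟨hay, hy⟩,
      Fin.cases (by simp) fun s => by simpa using Finset.mem_insert_of_mem (hyZ s),
      Fin.cases (by simpa using hga) fun s => by simpa [← Fin.succ_castSucc] using halt s,
      ?_, ?_, ?_⟩
    · refine natDegree_mul_le.trans ?_
      rw [natDegree_X_sub_C]
      omega
    · intro x hx
      rw [eval_mul, eval_sub, eval_X, eval_C]
      rcases Finset.mem_insert.mp hx with rfl | hx
      · rw [← mul_assoc]; exact mul_pos_of_neg_of_neg hneg (by linarith)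
      · rw [← mul_assoc]; exact mul_pos (hSZ x hx) (by linarith [hbZ x hx])
    · intro x hx
      rw [Fin.cons_zero] at hx ⊢
      rw [eval_mul, eval_sub, eval_X, eval_C, ← mul_assoc]
      exact mul_pos_of_neg_of_neg (mul_neg_of_pos_of_mul_neg (hS0 x (hx.trans (hay 0).le)) hga)
        (by linarith)

theorem exists_alternating_of_isMin {ι : Type*} [Fintype ι] (w x : ι → ℝ)
    (hwx : ∀ j, 0 < w j * x j) (hx : Function.Injective x) {k : ℕ} (hk : k < Fintype.card ι)
    {Q : ℝ[X]} (hQ : Q.natDegree ≤ k) (hQ0 : Q.eval 0 = 1)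
    (hmin : ∀ P : ℝ[X], P.natDegree ≤ k → P.eval 0 = 1 →
      ∑ j, w j * Q.eval (x j) ^ 2 ≤ ∑ j, w j * P.eval (x j) ^ 2) :
    ∃ y : Fin (k + 1) → ℝ, StrictMono y ∧ (∀ s, y s ∈ Set.range x) ∧
      ∀ s : Fin k, Q.eval (y s.castSucc) * Q.eval (y s.succ) < 0 := by
  classical
  obtain ⟨j₀, hj₀⟩ : ∃ j, Q.eval (x j) ≠ 0 := by
    by_contra! h
    have : Q = 0 := eq_zero_of_natDegree_lt_card_of_eval_eq_zero Q hx h (hQ.trans_lt hk)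
    simp [this] at hQ0
  set Z := (Finset.univ.filter fun j => Q.eval (x j) ≠ 0).image x
  obtain ⟨d, y, S, hy, hyZ, halt, hSd, hSZ, -⟩ :=
    exists_alternating_and_sign_matching_polynomial (Q.eval ·) Z
      (Finset.image_nonempty.mpr ⟨j₀, by simpa using hj₀⟩) (by simp [Z])
  have hkd : k ≤ d := by
    by_contra! hdk
    have hterm : ∀ j, Q.eval (x j) ≠ 0 → 0 < w j * x j * Q.eval (x j) * S.eval (x j) :=
      fun j hj => by
        rw [mul_assoc]
        exact mul_pos (hwx j) (hSZ _ (Finset.mem_image_of_mem x (by simpa using hj)))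
    have hpos : 0 < ∑ j, w j * x j * Q.eval (x j) * S.eval (x j) := by
      refine Finset.sum_pos' (fun j _ => ?_) ⟨j₀, Finset.mem_univ _, hterm j₀ hj₀⟩
      by_cases hj : Q.eval (x j) = 0
      · simp [hj]
      · exact (hterm j hj).le
    exact hpos.ne' (sum_mul_eval_mul_eval_eq_zero_of_isMin w x hQ hQ0 hmin (hSd.trans_lt hdk))
  refine ⟨y ∘ Fin.castLE (by omega), hy.comp (Fin.strictMono_castLE _), fun s => ?_, fun s => ?_⟩
  · obtain ⟨j, -, hj⟩ := Finset.mem_image.mp (hyZ _)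
    exact ⟨j, hj⟩
  · exact halt (Fin.castLE hkd s)

theorem exists_mem_Ioo_eq_zero_of_mul_neg {f : ℝ → ℝ} {a b : ℝ} (hab : a ≤ b)
    (hf : ContinuousOn f (Set.Icc a b)) (hfab : f a * f b < 0) :
    ∃ θ ∈ Set.Ioo a b, f θ = 0 := by
  rcases mul_neg_iff.mp hfab with ⟨ha, hb⟩ | ⟨ha, hb⟩
  · exact intermediate_value_Ioo' hab hf ⟨hb, ha⟩
  · exact intermediate_value_Ioo hab hf ⟨ha, hb⟩

theorem exists_roots_of_alternating {k : ℕ} (Q : ℝ[X]) (y : Fin (k + 1) → ℝ) (hy : StrictMono y)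
    (halt : ∀ s : Fin k, Q.eval (y s.castSucc) * Q.eval (y s.succ) < 0) :
    ∃ θ : Fin k → ℝ, StrictMono θ ∧ (∀ s, θ s ∈ Set.Ioo (y s.castSucc) (y s.succ)) ∧
      ∀ s, Q.eval (θ s) = 0 := by
  choose θ hθ hQθ using fun s : Fin k => exists_mem_Ioo_eq_zero_of_mul_neg
    (hy Fin.castSucc_lt_succ).le Q.continuous.continuousOn (halt s)
  refine ⟨θ, fun s t hst => ?_, hθ, hQθ⟩
  calc θ s < y s.succ := (hθ s).2
    _ ≤ y t.castSucc := hy.monotone (Fin.succ_le_castSucc_iff.mpr hst)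
    _ < θ t := (hθ t).1

theorem eq_prod_one_sub_inv_mul_X_of_roots {k : ℕ} (Q : ℝ[X]) (hQ : Q.natDegree ≤ k)
    (hQ0 : Q.eval 0 = 1) (θ : Fin k → ℝ) (hθ : Function.Injective θ)
    (hQθ : ∀ s, Q.eval (θ s) = 0) :
    Q = ∏ s, (1 - C (θ s)⁻¹ * X) := by
  have hθ0 : ∀ s, θ s ≠ 0 := fun s h => by simpa [h, hQ0] using hQθ s
  have hinj : Function.Injective (fun o : Option (Fin k) => o.elim 0 θ) := by
    rintro (_ | s) (_ | t) h
    · rfl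
    · exact absurd h.symm (hθ0 t)
    · exact absurd h (hθ0 s)
    · exact congrArg some (hθ h)
  refine eq_of_natDegree_lt_card_of_eval_eq _ _ hinj ?_ ?_
  · rintro (_ | s)
    · simp [hQ0, eval_prod]
    · simp only [Option.elim_some, hQθ, eval_prod]
      exact (Finset.prod_eq_zero (Finset.mem_univ s) (by simp [hθ0 s])).symm
  · have hprod : (∏ s, (1 - C (θ s)⁻¹ * X)).natDegree ≤ k := by
      refine (natDegree_prod_le _ _).trans ?_
      have : ∀ s, (1 - C (θ s)⁻¹ * X).natDegree ≤ 1 := fun s => by compute_degree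
      simpa using Finset.sum_le_sum fun s (_ : s ∈ Finset.univ) => this s
    simp only [Fintype.card_option, Fintype.card_fin]
    omega

theorem abs_one_sub_div_le_of_mem_uIcc {x θ z : ℝ} (hx : 0 < x) (hz : 0 < z)
    (hθ : θ ∈ Set.uIcc x z) : |1 - x / θ| ≤ |1 - x / z| := by
  rcases Set.mem_uIcc.mp hθ with ⟨hxθ, hθz⟩ | ⟨hzθ, hθx⟩
  · have hθ0 : 0 < θ := hx.trans_le hxθ
    have h1 : x / θ ≤ 1 := (div_le_one hθ0).mpr hxθ
    have h2 : x / z ≤ x / θ := div_le_div_of_nonneg_left hx.le hθ0 hθz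
    rw [abs_of_nonneg (by linarith), abs_of_nonneg (by linarith)]
    linarith
  · have hθ0 : 0 < θ := hz.trans_le hzθ
    have h1 : 1 ≤ x / θ := (one_le_div hθ0).mpr hθx
    have h2 : x / θ ≤ x / z := div_le_div_of_nonneg_left hx.le hz hzθ
    rw [abs_of_nonpos (by linarith), abs_of_nonpos (by linarith)]
    linarith

theorem exists_strictMono_abs_eval_le_prod {k : ℕ} (Q : ℝ[X]) (hQ : Q.natDegree ≤ k)
    (hQ0 : Q.eval 0 = 1) (y : Fin (k + 1) → ℝ) (hy : StrictMono y) (hy0 : 0 < y 0)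
    (halt : ∀ s : Fin k, Q.eval (y s.castSucc) * Q.eval (y s.succ) < 0) {x : ℝ} (hx : 0 < x) :
    ∃ j : Fin k → Fin (k + 1), StrictMono j ∧ |Q.eval x| ≤ ∏ s, |1 - x / y (j s)| := by
  obtain ⟨θ, hθ, hθy, hQθ⟩ := exists_roots_of_alternating Q y hy halt
  have hQx : |Q.eval x| = ∏ s, |1 - x / θ s| := by
    rw [eq_prod_one_sub_inv_mul_X_of_roots Q hQ hQ0 θ hθ.injective hQθ, eval_prod,
      Finset.abs_prod]
    simp [div_eq_inv_mul]
  -- each root is compared with the end of its bracketing interval on the far side from `x`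
  refine ⟨fun s => if x < θ s then s.succ else s.castSucc, fun s t hst => ?_, ?_⟩
  · have h1 : s.succ ≤ t.castSucc := Fin.succ_le_castSucc_iff.mpr hst
    dsimp only
    split_ifs with hs ht ht
    · exact Fin.succ_lt_succ_iff.mpr hst
    · exact absurd (hs.trans (hθ hst)) ht
    · exact Fin.castSucc_lt_succ.trans_le h1 |>.trans Fin.castSucc_lt_succ
    · exact Fin.castSucc_lt_castSucc_iff.mpr hst
  · rw [hQx]
    refine Finset.prod_le_prod (fun _ _ => abs_nonneg _) fun s _ => ?_
    refine abs_one_sub_div_le_of_mem_uIcc hx (hy0.trans_le (hy.monotone (Fin.zero_le _))) ?_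
    dsimp only
    split_ifs with hs
    · exact Set.mem_uIcc_of_le hs.le (hθy s).2.le
    · exact Set.mem_uIcc_of_ge (hθy s).1.le (not_lt.mp hs)

/-- |Q̂_k(λ_i)| ≤ max_{(j_1,…,j_k)∈I_k^+} ∏_l |1 − λ_i/λ_{j_l}|
(the max over strictly decreasing k-tuples, expressed as the supremum of the
corresponding finite set of values); consequently, if |1 − λ_i/λ_j| ≤ ε for all j
with ε > 0, then |Q̂_k(λ_i)| ≤ ε^k. -/
theorem stmt10 {n p : ℕ} (X : Matrix (Fin n) (Fin p) ℝ) (Y : Fin n → ℝ)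
    (lam : Fin n → ℝ) (u : Fin n → Fin n → ℝ)
    (hortho : ∀ i j, u i ⬝ᵥ u j = if i = j then (1 : ℝ) else 0)
    (hspec : X * Xᵀ = ∑ i, lam i • vecMulVec (u i) (u i))
    (hanti : StrictAnti lam) (hpos : ∀ i, 0 < lam i)
    (hphat : ∀ i, u i ⬝ᵥ Y ≠ 0)
    (Qhat : ℕ → Polynomial ℝ)
    (hQmem : ∀ k, 1 ≤ k → k < n → (Qhat k).natDegree ≤ k ∧ (Qhat k).eval 0 = 1)
    (hQmin : ∀ k, 1 ≤ k → k < n → ∀ Q : Polynomial ℝ, Q.natDegree ≤ k → Q.eval 0 = 1 →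
      ∑ i, (((Polynomial.aeval (X * Xᵀ)) (Qhat k) *ᵥ Y) i) ^ 2 ≤
        ∑ i, (((Polynomial.aeval (X * Xᵀ)) Q *ᵥ Y) i) ^ 2)
    (k : ℕ) (hk1 : 1 ≤ k) (hkn : k < n) (i : Fin n) :
    |(Qhat k).eval (lam i)| ≤
        sSup {r : ℝ | ∃ j : Fin k → Fin n, StrictAnti j ∧
          r = ∏ l, |1 - lam i / lam (j l)|} ∧
      ∀ ε : ℝ, 0 < ε → (∀ j, |1 - lam i / lam j| ≤ ε) →
        |(Qhat k).eval (lam i)| ≤ ε ^ k := by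
  obtain ⟨hQd, hQ0⟩ := hQmem k hk1 hkn
  have hmin : ∀ P : ℝ[X], P.natDegree ≤ k → P.eval 0 = 1 →
      ∑ j, (u j ⬝ᵥ Y) ^ 2 * (Qhat k).eval (lam j) ^ 2 ≤ ∑ j, (u j ⬝ᵥ Y) ^ 2 * P.eval (lam j) ^ 2 :=
    fun P hP hP0 => by
      simpa only [sum_sq_aeval_mulVec_eq _ lam u hortho hspec] using hQmin k hk1 hkn P hP hP0
  obtain ⟨y, hy, hylam, halt⟩ := exists_alternating_of_isMin _ lam
    (fun j => mul_pos (sq_pos_iff.mpr (hphat j)) (hpos j)) hanti.injective (by simpa using hkn)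
    hQd hQ0 hmin
  choose c hc using hylam
  have hcanti : StrictAnti c := fun s t hst => hanti.lt_iff_gt.mp (by simpa only [hc] using hy hst)
  obtain ⟨j, hj, hbound⟩ := exists_strictMono_abs_eval_le_prod (Qhat k) hQd hQ0 y hy
    (hc 0 ▸ hpos _) halt (hpos i)
  simp only [← hc] at hbound
  refine ⟨hbound.trans (le_csSup ?_ ⟨c ∘ j, hcanti.comp_strictMono hj, rfl⟩), fun ε _ hε => ?_⟩
  · refine (Set.finite_range fun j : Fin k → Fin n => ∏ l, |1 - lam i / lam (j l)|).bddAbove.mono ?_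
    rintro r ⟨j, -, rfl⟩
    exact ⟨j, rfl⟩
  · calc |(Qhat k).eval (lam i)| ≤ ∏ s, |1 - lam i / lam (c (j s))| := hbound
      _ ≤ ∏ _s : Fin k, ε := Finset.prod_le_prod (fun _ _ => abs_nonneg _) fun s _ => hε _
      _ = ε ^ k := by simp
end

section
/- Let 0 < a < b and k ≥ 1, and set C = b/a and ρ = (√C − 1)/(√C + 1). Then there exists a real polynomial Q of degree at most k with Q(0) = 1 such that |Q(t)| ≤ 2ρ^k for every t ∈ [a, b]. (The polynomial can be taken to be the normalized shifted Chebyshev polynomial Q(t) = C_k(1 + 2(t−b)/(b−a)) / C_k(1 + 2(0−b)/(b−a)), where C_k is the k-th Chebyshev polynomial of the first kind.) -/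
open Polynomial Polynomial.Chebyshev

/-!
The affine map sending `[a, b]` onto `[-1, 1]` sends `0` to `μ = (a + b) / (b - a) > 1`, and
`μ = (ρ + ρ⁻¹) / 2`. On `[-1, 1]` we have `|T_k| ≤ 1`, while the identity
`T_k ((z + z⁻¹) / 2) = (z ^ k + z⁻¹ ^ k) / 2` gives `T_k μ ≥ ρ⁻ᵏ / 2`. Dividing the shifted
`T_k` by `T_k μ` therefore yields a polynomial equal to `1` at `0` and bounded by `2 ρ ^ k`
on `[a, b]`.
-/

theorem Polynomial.Chebyshev.T_eval_add_div_two_of_mul_eq_one {K : Type*} [Field K]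
    (h2 : (2 : K) ≠ 0) {x y : K} (hxy : x * y = 1) (n : ℕ) :
    (T K n).eval ((x + y) / 2) = (x ^ n + y ^ n) / 2 := by
  let := invertibleOfNonzero h2
  rw [T_eq_half_mul_C_comp_two_mul_X, ← dickson_one_one_eq_chebyshev_C]
  simp only [eval_mul, eval_C, eval_comp, eval_ofNat, eval_X]
  rw [mul_div_cancel₀ _ h2, dickson_one_one_eval_add_inv x y hxy, invOf_eq_inv, inv_mul_eq_div]

theorem inv_eval_T_add_inv_div_two_le {ρ : ℝ} (hρ : 0 < ρ) (n : ℕ) :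
    ((T ℝ n).eval ((ρ + ρ⁻¹) / 2))⁻¹ ≤ 2 * ρ ^ n := by
  rw [T_eval_add_div_two_of_mul_eq_one two_ne_zero (mul_inv_cancel₀ hρ.ne'), inv_pow]
  calc ((ρ ^ n + (ρ ^ n)⁻¹) / 2)⁻¹ ≤ ((ρ ^ n)⁻¹ / 2)⁻¹ := by
        have := pow_pos hρ n
        gcongr
        linarith
    _ = 2 * ρ ^ n := by rw [inv_div, div_inv_eq_mul]

noncomputable def convergenceFactor (a b : ℝ) : ℝ := (√(b / a) - 1) / (√(b / a) + 1)

section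
variable {a b : ℝ}

theorem one_lt_sqrt_div (ha : 0 < a) (hab : a < b) : 1 < √(b / a) :=
  Real.lt_sqrt_of_sq_lt (by rw [one_pow, one_lt_div ha]; exact hab)

theorem convergenceFactor_pos (ha : 0 < a) (hab : a < b) : 0 < convergenceFactor a b := by
  have := one_lt_sqrt_div ha hab
  unfold convergenceFactor
  apply div_pos <;> linarith

theorem convergenceFactor_add_inv_div_two (ha : 0 < a) (hab : a < b) :
    (convergenceFactor a b + (convergenceFactor a b)⁻¹) / 2 = (a + b) / (b - a) := by
  have hs := one_lt_sqrt_div ha hab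
  have hsq : √(b / a) ^ 2 = b / a := Real.sq_sqrt (div_pos (ha.trans hab) ha).le
  have hab' : (a + b) / (b - a) = (√(b / a) ^ 2 + 1) / (√(b / a) ^ 2 - 1) := by
    rw [hsq]
    field_simp
    ring
  rw [convergenceFactor, hab']
  have : √(b / a) - 1 ≠ 0 := by linarith
  have : √(b / a) + 1 ≠ 0 := by linarith
  have : √(b / a) ^ 2 - 1 ≠ 0 := by nlinarith
  field_simp
  ring

end

/-- Orientation-reversing (`a ↦ 1`, `b ↦ -1`), so that `0 < a` is sent to a point `> 1`. -/
noncomputable def chebyshevShift (a b : ℝ) : ℝ[X] :=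
  C (-(2 / (b - a))) * X + C ((a + b) / (b - a))

noncomputable def normalizedChebyshev (a b c : ℝ) (n : ℕ) : ℝ[X] :=
  C ((T ℝ n).eval ((chebyshevShift a b).eval c))⁻¹ * (T ℝ n).comp (chebyshevShift a b)

section
variable {a b : ℝ}

theorem eval_chebyshevShift (t : ℝ) :
    (chebyshevShift a b).eval t = (a + b - 2 * t) / (b - a) := by
  simp only [chebyshevShift, eval_add, eval_mul, eval_C, eval_X]
  ring

theorem abs_eval_chebyshevShift_le_one (hab : a < b) {t : ℝ} (ht : t ∈ Set.Icc a b) :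
    |(chebyshevShift a b).eval t| ≤ 1 := by
  have hba : 0 < b - a := sub_pos.mpr hab
  rw [eval_chebyshevShift, abs_div, abs_of_pos hba, div_le_one hba, abs_le]
  constructor <;> linarith [ht.1, ht.2]

theorem natDegree_normalizedChebyshev_le (c : ℝ) (n : ℕ) :
    (normalizedChebyshev a b c n).natDegree ≤ n :=
  calc (normalizedChebyshev a b c n).natDegree
      ≤ ((T ℝ n).comp (chebyshevShift a b)).natDegree := natDegree_C_mul_le _ _
    _ ≤ (T ℝ n).natDegree * (chebyshevShift a b).natDegree := natDegree_comp_le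
    _ ≤ n * 1 := Nat.mul_le_mul (by rw [natDegree_T]; rfl) natDegree_linear_le
    _ = n := mul_one n

theorem eval_normalizedChebyshev_self {c : ℝ} {n : ℕ}
    (hc : (T ℝ n).eval ((chebyshevShift a b).eval c) ≠ 0) :
    (normalizedChebyshev a b c n).eval c = 1 := by
  rw [normalizedChebyshev, eval_mul, eval_C, eval_comp, inv_mul_cancel₀ hc]

theorem abs_eval_normalizedChebyshev_le (hab : a < b) (c : ℝ) (n : ℕ) {t : ℝ}
    (ht : t ∈ Set.Icc a b) :
    |(normalizedChebyshev a b c n).eval t| ≤ |(T ℝ n).eval ((chebyshevShift a b).eval c)|⁻¹ := by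
  rw [normalizedChebyshev, eval_mul, eval_C, eval_comp, abs_mul, abs_inv]
  exact mul_le_of_le_one_right (by positivity)
    (abs_eval_T_real_le_one _ (abs_eval_chebyshevShift_le_one hab ht))

end

theorem stmt14_general (a b : ℝ) (ha : 0 < a) (hab : a < b) (k : ℕ) :
    ∃ Q : Polynomial ℝ, Q.natDegree ≤ k ∧ Q.eval 0 = 1 ∧
      ∀ t ∈ Set.Icc a b,
        |Q.eval t| ≤ 2 * ((Real.sqrt (b / a) - 1) / (Real.sqrt (b / a) + 1)) ^ k := by
  have hρ := convergenceFactor_pos ha hab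
  have hshift : (chebyshevShift a b).eval 0 = (a + b) / (b - a) := by
    rw [eval_chebyshevShift, mul_zero, sub_zero]
  have hT : 0 < (T ℝ k).eval ((chebyshevShift a b).eval 0) := zero_lt_one.trans_le <|
    one_le_eval_T_real _ (by rw [hshift, one_le_div (sub_pos.mpr hab)]; linarith)
  refine ⟨normalizedChebyshev a b 0 k, natDegree_normalizedChebyshev_le 0 k,
    eval_normalizedChebyshev_self hT.ne', fun t ht => ?_⟩
  calc |(normalizedChebyshev a b 0 k).eval t|
      ≤ |(T ℝ k).eval ((chebyshevShift a b).eval 0)|⁻¹ :=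
        abs_eval_normalizedChebyshev_le hab 0 k ht
    _ = ((T ℝ k).eval ((convergenceFactor a b + (convergenceFactor a b)⁻¹) / 2))⁻¹ := by
        rw [abs_of_pos hT, hshift, convergenceFactor_add_inv_div_two ha hab]
    _ ≤ 2 * convergenceFactor a b ^ k := inv_eval_T_add_inv_div_two_le hρ k

/-- for 0 < a < b, k ≥ 1, C = b/a and ρ = (√C − 1)/(√C + 1), there is a
real polynomial Q of degree ≤ k with Q(0) = 1 such that |Q(t)| ≤ 2ρ^k on [a, b]
(e.g. the normalized shifted Chebyshev polynomial). -/
theorem stmt14 (a b : ℝ) (ha : 0 < a) (hab : a < b) (k : ℕ) (hk : 1 ≤ k) :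
    ∃ Q : Polynomial ℝ, Q.natDegree ≤ k ∧ Q.eval 0 = 1 ∧
      ∀ t ∈ Set.Icc a b,
        |Q.eval t| ≤ 2 * ((Real.sqrt (b / a) - 1) / (Real.sqrt (b / a) + 1)) ^ k :=
  stmt14_general a b ha hab k
end
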